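/- On a probability space, in the multilayer e-filter setting with null structure, fix original levels α₀^(1),…,α₀^(M) ∈ (0,1), target levels α^(1),…,α^(M) ∈ (0,1), and an integer R ≥ 1. For each m ∈ [M] and each replication r ∈ [R], let R_r^(m) ⊆ [G^(m)] be a random rejection set and V̂_r^(m) a nonnegative random variable satisfying E[|R_r^(m) ∩ H0^(m)| / max(V̂_r^(m), α₀^(m))] ≤ 1, and set e_{g,r}^(m) = G^(m)·1{g ∈ R_r^(m)}/max(V̂_r^(m), α₀^(m)). Given fixed weights w_r^(m) ≥ 0 with Σ_{r=1}^R w_r^(m) = 1, define the averaged generalized e-values ē_g^(m) = Σ_{r=1}^R w_r^(m) e_{g,r}^(m), and let S_derand be the output of the generalized e-filter applied to (ē_g^(m)) at levels α^(1),…,α^(M). Then FDR^(m) ≤ α^(m) for every m ∈ [M]. -/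
import Mathlib


open scoped ENNReal
open Filter MeasureTheory

namespace MultilayerEFilter

variable {N M : ℕ} {G : Fin M → ℕ}

/-- Candidate selection set `S(t) = {j : e_{h(m,j)}^(m) ≥ t^(m) for all m}`. -/
noncomputable def sel (h : (m : Fin M) → Fin N → Fin (G m))
    (e : (m : Fin M) → Fin (G m) → ℝ≥0∞) (t : Fin M → ℝ≥0∞) : Finset (Fin N) :=
  Finset.univ.filter fun j => ∀ m, t m ≤ e m (h m j)

/-- Induced group selection `S^(m) = {g : A_g^(m) ∩ S ≠ ∅}`. -/
noncomputable def selGrp (A : (m : Fin M) → Fin (G m) → Finset (Fin N))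
    (S : Finset (Fin N)) (m : Fin M) : Finset (Fin (G m)) :=
  Finset.univ.filter fun g => ∃ j ∈ A m g, j ∈ S

/-- Estimated FDP at layer `m`: `(G^(m)/t^(m)) / (|S^(m)(t)| ∨ 1)` (with `G/∞ = 0`). -/
noncomputable def FDPhat (A : (m : Fin M) → Fin (G m) → Finset (Fin N))
    (h : (m : Fin M) → Fin N → Fin (G m))
    (e : (m : Fin M) → Fin (G m) → ℝ≥0∞) (t : Fin M → ℝ≥0∞) (m : Fin M) : ℝ≥0∞ :=
  ((G m : ℝ≥0∞) / t m) / ((max (selGrp A (sel h e t) m).card 1 : ℕ) : ℝ≥0∞)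

/-- Admissible threshold vectors. -/
noncomputable def admissible (A : (m : Fin M) → Fin (G m) → Finset (Fin N))
    (h : (m : Fin M) → Fin N → Fin (G m))
    (e : (m : Fin M) → Fin (G m) → ℝ≥0∞) (α : Fin M → ℝ) : Set (Fin M → ℝ≥0∞) :=
  {t | (∀ m, 1 ≤ t m) ∧ ∀ m, FDPhat A h e t m ≤ ENNReal.ofReal (α m)}

/-- Threshold of the generalized e-filter: coordinatewise minimum over admissible vectors. -/
noncomputable def filterThreshold (A : (m : Fin M) → Fin (G m) → Finset (Fin N))
    (h : (m : Fin M) → Fin N → Fin (G m))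
    (e : (m : Fin M) → Fin (G m) → ℝ≥0∞) (α : Fin M → ℝ) (m : Fin M) : ℝ≥0∞ :=
  sInf {s | ∃ t ∈ admissible A h e α, t m = s}

/-- Output of the generalized e-filter. -/
noncomputable def output (A : (m : Fin M) → Fin (G m) → Finset (Fin N))
    (h : (m : Fin M) → Fin N → Fin (G m))
    (e : (m : Fin M) → Fin (G m) → ℝ≥0∞) (α : Fin M → ℝ) : Finset (Fin N) :=
  sel h e (filterThreshold A h e α)

/-- Null groups at layer `m`: groups entirely contained in the null feature set. -/
def nullGrp (A : (m : Fin M) → Fin (G m) → Finset (Fin N))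
    (H0 : Finset (Fin N)) (m : Fin M) : Finset (Fin (G m)) :=
  Finset.univ.filter fun g => A m g ⊆ H0

/-- Layer-`m` false discovery proportion of a selected feature set. -/
noncomputable def FDP (A : (m : Fin M) → Fin (G m) → Finset (Fin N))
    (H0 : Finset (Fin N)) (S : Finset (Fin N)) (m : Fin M) : ℝ≥0∞ :=
  ((selGrp A S m ∩ nullGrp A H0 m).card : ℝ≥0∞) /
    ((max (selGrp A S m).card 1 : ℕ) : ℝ≥0∞)

end MultilayerEFilter

namespace MultilayerEFilter

/-!
STATEMENT 11 (Theorem 2.9: DFEFP, finite-sample case).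

For each layer `m` and replication `r ∈ [R]`, a random rejection set `R_r^(m)` and
nonnegative estimate `V̂_r^(m)` satisfy
`E[|R_r^(m) ∩ H0^(m)| / max(V̂_r^(m), α₀^(m))] ≤ 1`.  With fixed nonnegative weights
`w_r^(m)` summing to one, the generalized e-filter applied to the averaged
generalized e-values `ē_g^(m) = Σ_r w_r^(m)·G^(m)·1{g ∈ R_r^(m)}/max(V̂_r^(m), α₀^(m))`
at target levels `α^(1),…,α^(M)` satisfies `FDR^(m) ≤ α^(m)` for every `m`.
-/

lemma selGrp_mono' {N M : ℕ} {G : Fin M → ℕ} (A : (m : Fin M) → Fin (G m) → Finset (Fin N))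
    {S S' : Finset (Fin N)} (hSS : S ⊆ S') (m : Fin M) :
    selGrp A S m ⊆ selGrp A S' m := by
  intro g hg
  simp only [selGrp, Finset.mem_filter, Finset.mem_univ, true_and] at hg ⊢
  obtain ⟨j, hj1, hj2⟩ := hg
  exact ⟨j, hj1, hSS hj2⟩

lemma sel_anti' {N M : ℕ} {G : Fin M → ℕ} (h : (m : Fin M) → Fin N → Fin (G m))
    (e : (m : Fin M) → Fin (G m) → ℝ≥0∞) {t t' : Fin M → ℝ≥0∞}
    (htt : ∀ m, t m ≤ t' m) : sel h e t' ⊆ sel h e t := by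
  intro j hj
  simp only [sel, Finset.mem_filter, Finset.mem_univ, true_and] at hj ⊢
  exact fun m => le_trans (htt m) (hj m)

lemma det_bound' {N M : ℕ} {G : Fin M → ℕ} (hN : 1 ≤ N)
    (A : (m : Fin M) → Fin (G m) → Finset (Fin N))
    (h : (m : Fin M) → Fin N → Fin (G m))
    (hdisj : ∀ m, ∀ g₁ g₂ : Fin (G m), g₁ ≠ g₂ → Disjoint (A m g₁) (A m g₂))
    (hmem : ∀ m j, j ∈ A m (h m j))
    (H0 : Finset (Fin N)) (α : Fin M → ℝ) (hα : ∀ m, 0 < α m)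
    (e : (m : Fin M) → Fin (G m) → ℝ≥0∞) (m : Fin M) :
    FDP A H0 (output A h e α) m ≤
      ENNReal.ofReal (α m) * (∑ g ∈ nullGrp A H0 m, e m g) / (G m : ℝ≥0∞) := by
  set th := filterThreshold A h e α with hth
  set S := sel h e th with hSdef
  have hout : output A h e α = S := rfl
  set K : ℕ := max (selGrp A S m).card 1 with hKdef
  set a := ENNReal.ofReal (α m) with hadef
  set E := ∑ g ∈ nullGrp A H0 m, e m g with hEdef
  have hGpos : 0 < G m := (h m ⟨0, hN⟩).pos
  have hG0 : (G m : ℝ≥0∞) ≠ 0 := Nat.cast_ne_zero.mpr hGpos.ne'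
  have hG't : (G m : ℝ≥0∞) ≠ ∞ := ENNReal.natCast_ne_top _
  have ha0 : a ≠ 0 := (ENNReal.ofReal_pos.mpr (hα m)).ne'
  have hat : a ≠ ∞ := ENNReal.ofReal_ne_top
  have hK1 : 1 ≤ K := le_max_right _ _
  have hK0 : (K : ℝ≥0∞) ≠ 0 := Nat.cast_ne_zero.mpr (Nat.one_le_iff_ne_zero.mp hK1)
  have hKt : (K : ℝ≥0∞) ≠ ∞ := ENNReal.natCast_ne_top _
  have haK0 : a * (K : ℝ≥0∞) ≠ 0 := mul_ne_zero ha0 hK0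
  have haKt : a * (K : ℝ≥0∞) ≠ ∞ := ENNReal.mul_ne_top hat hKt
  have hlow : ∀ t ∈ admissible A h e α, ∀ m', th m' ≤ t m' := by
    intro t ht m'
    exact sInf_le ⟨t, ht, rfl⟩
  have key : ∀ t ∈ admissible A h e α, (G m : ℝ≥0∞) / (a * K) ≤ t m := by
    intro t ht
    have h1 : FDPhat A h e t m ≤ a := ht.2 m
    set Kt : ℕ := max (selGrp A (sel h e t) m).card 1 with hKtdef
    have hKt1 : 1 ≤ Kt := le_max_right _ _
    have hKt0 : (Kt : ℝ≥0∞) ≠ 0 := Nat.cast_ne_zero.mpr (Nat.one_le_iff_ne_zero.mp hKt1)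
    have hKtt : (Kt : ℝ≥0∞) ≠ ∞ := ENNReal.natCast_ne_top _
    have hsub : sel h e t ⊆ S := sel_anti' h e (hlow t ht)
    have hKtK : (Kt : ℝ≥0∞) ≤ (K : ℝ≥0∞) := by
      exact_mod_cast max_le_max (Finset.card_le_card (selGrp_mono' A hsub m)) le_rfl
    have h2 : (G m : ℝ≥0∞) / t m ≤ a * Kt := (ENNReal.div_le_iff hKt0 hKtt).mp h1
    have h3 : (G m : ℝ≥0∞) / t m ≤ a * K := h2.trans (mul_le_mul_right hKtK a)
    rcases eq_or_ne (t m) ∞ with htm | htm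
    · rw [htm]; exact le_top
    · have htm0 : t m ≠ 0 := by
        have := ht.1 m; intro hz; rw [hz] at this; exact (not_le.mpr zero_lt_one) this
      have h4 : (G m : ℝ≥0∞) ≤ a * K * t m := (ENNReal.div_le_iff htm0 htm).mp h3
      exact (ENNReal.div_le_iff haK0 haKt).mpr (by rw [mul_comm (t m)]; exact h4)
  have step4' : (G m : ℝ≥0∞) / (a * K) ≤ th m := by
    apply le_sInf
    rintro s ⟨t, ht, rfl⟩
    exact key t ht
  have step4 : (G m : ℝ≥0∞) ≤ a * (K : ℝ≥0∞) * th m := by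
    have h5 := (ENNReal.div_le_iff haK0 haKt).mp step4'
    rw [mul_comm (th m)] at h5
    exact h5
  set c : ℕ := (selGrp A S m ∩ nullGrp A H0 m).card with hcdef
  have step5 : (c : ℝ≥0∞) * th m ≤ E := by
    have hsel : ∀ g ∈ selGrp A S m ∩ nullGrp A H0 m, th m ≤ e m g := by
      intro g hg
      have hg1 := (Finset.mem_inter.mp hg).1
      simp only [selGrp, Finset.mem_filter, Finset.mem_univ, true_and] at hg1
      obtain ⟨j, hjA, hjS⟩ := hg1
      have hj' : ∀ m', th m' ≤ e m' (h m' j) := (Finset.mem_filter.mp hjS).2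
      have hgj : h m j = g := by
        by_contra hne'
        exact Finset.disjoint_left.mp (hdisj m (h m j) g hne') (hmem m j) hjA
      rw [← hgj]; exact hj' m
    calc (c : ℝ≥0∞) * th m = ∑ _g ∈ selGrp A S m ∩ nullGrp A H0 m, th m := by
          rw [Finset.sum_const, nsmul_eq_mul]
      _ ≤ ∑ g ∈ selGrp A S m ∩ nullGrp A H0 m, e m g := Finset.sum_le_sum hsel
      _ ≤ E := Finset.sum_le_sum_of_subset Finset.inter_subset_right
  have final : (c : ℝ≥0∞) * (G m : ℝ≥0∞) ≤ a * E * K := by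
    calc (c : ℝ≥0∞) * (G m : ℝ≥0∞) ≤ (c : ℝ≥0∞) * (a * K * th m) :=
          mul_le_mul_right step4 _
      _ = (a * K) * ((c : ℝ≥0∞) * th m) := by ring
      _ ≤ (a * K) * E := mul_le_mul_right step5 _
      _ = a * E * K := by ring
  rw [hout]
  show (c : ℝ≥0∞) / (K : ℝ≥0∞) ≤ a * E / (G m : ℝ≥0∞)
  rw [ENNReal.div_le_iff hK0 hKt]
  have hre : a * E / (G m : ℝ≥0∞) * (K : ℝ≥0∞) = a * E * (K : ℝ≥0∞) / (G m : ℝ≥0∞) := by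
    rw [div_eq_mul_inv, div_eq_mul_inv]; ring
  rw [hre, ENNReal.le_div_iff_mul_le (Or.inl hG0) (Or.inl hG't)]
  exact final

theorem stmt11 {N M : ℕ} (hN : 1 ≤ N) (hM : 1 ≤ M) {G : Fin M → ℕ}
    (A : (m : Fin M) → Fin (G m) → Finset (Fin N))
    (h : (m : Fin M) → Fin N → Fin (G m))
    (hne : ∀ m g, (A m g).Nonempty)
    (hdisj : ∀ m, ∀ g₁ g₂ : Fin (G m), g₁ ≠ g₂ → Disjoint (A m g₁) (A m g₂))
    (hmem : ∀ m j, j ∈ A m (h m j))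
    (H0 : Finset (Fin N))
    {Ω : Type*} [MeasurableSpace Ω] (P : Measure Ω) [IsProbabilityMeasure P]
    (α₀ α : Fin M → ℝ)
    (hα₀ : ∀ m, α₀ m ∈ Set.Ioo (0 : ℝ) 1) (hα : ∀ m, α m ∈ Set.Ioo (0 : ℝ) 1)
    (R : ℕ) (hR : 1 ≤ R)
    (Rej : Ω → (m : Fin M) → Fin R → Finset (Fin (G m)))
    (V : Ω → Fin M → Fin R → ℝ) (hV : ∀ ω m r, 0 ≤ V ω m r)
    (hmeasR : ∀ m (r : Fin R) (g : Fin (G m)), MeasurableSet {ω | g ∈ Rej ω m r})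
    (hmeasV : ∀ m r, Measurable fun ω => V ω m r)
    (hE : ∀ m r, ∫⁻ ω, ENNReal.ofReal
        (((Rej ω m r ∩ nullGrp A H0 m).card : ℝ) / max (V ω m r) (α₀ m)) ∂P ≤ 1)
    (w : Fin M → Fin R → ℝ) (hw : ∀ m r, 0 ≤ w m r) (hw1 : ∀ m, ∑ r, w m r = 1) :
    ∀ m, (∫⁻ ω, FDP A H0
        (output A h (fun m' g => ENNReal.ofReal (∑ r, w m' r *
          ((G m' : ℝ) * (if g ∈ Rej ω m' r then 1 else 0) / max (V ω m' r) (α₀ m')))) α)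
        m ∂P) ≤ ENNReal.ofReal (α m) := by
  intro m
  set a := ENNReal.ofReal (α m) with hadef
  have hGpos : 0 < G m := (h m ⟨0, hN⟩).pos
  have hG0 : (G m : ℝ≥0∞) ≠ 0 := Nat.cast_ne_zero.mpr hGpos.ne'
  have hGt : (G m : ℝ≥0∞) ≠ ∞ := ENNReal.natCast_ne_top _
  have hmx : ∀ ω r, 0 < max (V ω m r) (α₀ m) := fun ω r =>
    lt_of_lt_of_le (hα₀ m).1 (le_max_right _ _)
  -- per-replication integrand
  set φ : Fin R → Ω → ℝ≥0∞ := fun r ω => ENNReal.ofReal (w m r) * (G m : ℝ≥0∞) *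
    ENNReal.ofReal (((Rej ω m r ∩ nullGrp A H0 m).card : ℝ) / max (V ω m r) (α₀ m)) with hφdef
  -- pointwise FDP bound from the deterministic lemma
  have hpt : ∀ ω, FDP A H0
      (output A h (fun m' g => ENNReal.ofReal (∑ r, w m' r *
        ((G m' : ℝ) * (if g ∈ Rej ω m' r then 1 else 0) / max (V ω m' r) (α₀ m')))) α) m
      ≤ a * (∑ g ∈ nullGrp A H0 m, ENNReal.ofReal (∑ r, w m r *
        ((G m : ℝ) * (if g ∈ Rej ω m r then 1 else 0) / max (V ω m r) (α₀ m)))) / (G m : ℝ≥0∞) :=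
    fun ω => det_bound' hN A h hdisj hmem H0 α (fun m' => (hα m').1) _ m
  -- rewrite the null-group sum as a sum over replications
  have hterm : ∀ ω (g : Fin (G m)) (r : Fin R), 0 ≤ w m r *
      ((G m : ℝ) * (if g ∈ Rej ω m r then 1 else 0) / max (V ω m r) (α₀ m)) := by
    intro ω g r
    apply mul_nonneg (hw m r)
    apply div_nonneg _ (hmx ω r).le
    apply mul_nonneg (Nat.cast_nonneg _)
    split <;> norm_num
  have hcard : ∀ ω r, (∑ g ∈ nullGrp A H0 m, (if g ∈ Rej ω m r then (1:ℝ) else 0))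
      = ((Rej ω m r ∩ nullGrp A H0 m).card : ℝ) := by
    intro ω r
    rw [Finset.sum_boole]
    congr 1
    rw [Finset.filter_mem_eq_inter, Finset.inter_comm]
  have hptE : ∀ ω, (∑ g ∈ nullGrp A H0 m, ENNReal.ofReal (∑ r, w m r *
      ((G m : ℝ) * (if g ∈ Rej ω m r then 1 else 0) / max (V ω m r) (α₀ m))))
      = ∑ r, φ r ω := by
    intro ω
    calc (∑ g ∈ nullGrp A H0 m, ENNReal.ofReal (∑ r, w m r *
          ((G m : ℝ) * (if g ∈ Rej ω m r then 1 else 0) / max (V ω m r) (α₀ m))))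
        = ∑ g ∈ nullGrp A H0 m, ∑ r, ENNReal.ofReal (w m r *
          ((G m : ℝ) * (if g ∈ Rej ω m r then 1 else 0) / max (V ω m r) (α₀ m))) := by
          refine Finset.sum_congr rfl fun g _ => ?_
          exact ENNReal.ofReal_sum_of_nonneg fun r _ => hterm ω g r
      _ = ∑ r, ∑ g ∈ nullGrp A H0 m, ENNReal.ofReal (w m r *
          ((G m : ℝ) * (if g ∈ Rej ω m r then 1 else 0) / max (V ω m r) (α₀ m))) :=
          Finset.sum_comm
      _ = ∑ r, φ r ω := by
          refine Finset.sum_congr rfl fun r _ => ?_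
          rw [← ENNReal.ofReal_sum_of_nonneg fun g _ => hterm ω g r]
          have hre : (∑ g ∈ nullGrp A H0 m, w m r *
              ((G m : ℝ) * (if g ∈ Rej ω m r then 1 else 0) / max (V ω m r) (α₀ m)))
              = w m r * ((G m : ℝ) *
                (((Rej ω m r ∩ nullGrp A H0 m).card : ℝ) / max (V ω m r) (α₀ m))) := by
            rw [← hcard ω r, Finset.sum_div, Finset.mul_sum, Finset.mul_sum]
            refine Finset.sum_congr rfl fun g _ => ?_
            ring
          rw [hre, ENNReal.ofReal_mul (hw m r),
            ENNReal.ofReal_mul (by positivity : (0:ℝ) ≤ (G m : ℝ)),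
            ENNReal.ofReal_natCast, ← mul_assoc]
  -- measurability of φ r
  have hmφ : ∀ r : Fin R, Measurable (φ r) := by
    intro r
    have hcardm : Measurable fun ω => ((Rej ω m r ∩ nullGrp A H0 m).card : ℝ) := by
      have heq : (fun ω => ((Rej ω m r ∩ nullGrp A H0 m).card : ℝ))
          = fun ω => ∑ g ∈ nullGrp A H0 m, (if g ∈ Rej ω m r then (1:ℝ) else 0) := by
        funext ω; rw [hcard ω r]
      rw [heq]
      exact Finset.measurable_sum _ fun g _ =>
        Measurable.ite (hmeasR m r g) measurable_const measurable_const
    have hdivm : Measurable fun ω =>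
        (((Rej ω m r ∩ nullGrp A H0 m).card : ℝ) / max (V ω m r) (α₀ m)) :=
      hcardm.div ((hmeasV m r).max measurable_const)
    exact (ENNReal.measurable_ofReal.comp hdivm).const_mul _
  have haGt : a / (G m : ℝ≥0∞) ≠ ∞ := (ENNReal.div_lt_top ENNReal.ofReal_ne_top hG0).ne
  calc (∫⁻ ω, FDP A H0
        (output A h (fun m' g => ENNReal.ofReal (∑ r, w m' r *
          ((G m' : ℝ) * (if g ∈ Rej ω m' r then 1 else 0) / max (V ω m' r) (α₀ m')))) α)
        m ∂P)
      ≤ ∫⁻ ω, a * (∑ g ∈ nullGrp A H0 m, ENNReal.ofReal (∑ r, w m r *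
        ((G m : ℝ) * (if g ∈ Rej ω m r then 1 else 0) / max (V ω m r) (α₀ m)))) / (G m : ℝ≥0∞) ∂P :=
        lintegral_mono hpt
    _ = ∫⁻ ω, (a / (G m : ℝ≥0∞)) * (∑ r, φ r ω) ∂P := by
        refine lintegral_congr fun ω => ?_
        rw [hptE ω, div_eq_mul_inv, div_eq_mul_inv]
        ring
    _ = (a / (G m : ℝ≥0∞)) * ∫⁻ ω, (∑ r, φ r ω) ∂P :=
        lintegral_const_mul' _ _ haGt
    _ = (a / (G m : ℝ≥0∞)) * ∑ r, ∫⁻ ω, φ r ω ∂P := by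
        rw [lintegral_finset_sum _ fun r _ => hmφ r]
    _ ≤ (a / (G m : ℝ≥0∞)) * ∑ r, ENNReal.ofReal (w m r) * (G m : ℝ≥0∞) := by
        refine mul_le_mul_right (Finset.sum_le_sum fun r _ => ?_) _
        have : (∫⁻ ω, φ r ω ∂P) = ENNReal.ofReal (w m r) * (G m : ℝ≥0∞) *
            ∫⁻ ω, ENNReal.ofReal (((Rej ω m r ∩ nullGrp A H0 m).card : ℝ)
              / max (V ω m r) (α₀ m)) ∂P := by
          rw [← lintegral_const_mul' _ _ (ENNReal.mul_ne_top ENNReal.ofReal_ne_top hGt)]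
        rw [this]
        calc ENNReal.ofReal (w m r) * (G m : ℝ≥0∞) *
            ∫⁻ ω, ENNReal.ofReal (((Rej ω m r ∩ nullGrp A H0 m).card : ℝ)
              / max (V ω m r) (α₀ m)) ∂P
            ≤ ENNReal.ofReal (w m r) * (G m : ℝ≥0∞) * 1 := mul_le_mul_right (hE m r) _
          _ = ENNReal.ofReal (w m r) * (G m : ℝ≥0∞) := mul_one _
    _ = (a / (G m : ℝ≥0∞)) * ((∑ r, ENNReal.ofReal (w m r)) * (G m : ℝ≥0∞)) := by
        rw [← Finset.sum_mul]
    _ = (a / (G m : ℝ≥0∞)) * (G m : ℝ≥0∞) := by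
        rw [← ENNReal.ofReal_sum_of_nonneg fun r _ => hw m r, hw1 m, ENNReal.ofReal_one, one_mul]
    _ = a := ENNReal.div_mul_cancel hG0 hGt


end MultilayerEFilter
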